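/- arXiv:1606.02928 — 3 statements merged into one kernel-verified Lean document; each statement's English description precedes it below -/
import Mathlib

section
/- For all complex numbers q, a, b, p with |p| < 1 and q, a, b nonzero, and all integers k and n such that every theta-function factor appearing in a denominator is nonzero, the elliptic weights satisfy the shift properties w_{a,b;q,p}(k+n) = w_{a q^{2k}, b q^{k}; q, p}(n) and W_{a,b;q,p}(k+n) = W_{a,b;q,p}(k) · W_{a q^{2k}, b q^{k}; q, p}(n). -/
/-!
Both weights only see the parameters through theta arguments of the form `a q^{2k+m}`,
`b q^{k+m}` and `a q^{k+m}/b`, and these are unchanged under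
`(a, b, k) ↦ (a q^{2j}, b q^j, k - j)`; this gives the shift of the small weight.
For the big weight, `W(k) = q^k φ(k) / φ(0)` with
`φ(k) = θ(a q^{1+2k}) / (θ(b q^{k+1}) θ(b q^{k+2}) θ(a q^{k-1}/b) θ(a q^k/b))`,
so the shift of the big weight is a telescoping product, valid as soon as `φ(k) ≠ 0`.
-/

open scoped BigOperators Classical

noncomputable section
namespace EllRook

/-- Modified Jacobi theta function `θ(x;p)`. -/
def theta (x p : ℂ) : ℂ := ∏' j : ℕ, ((1 - p ^ j * x) * (1 - p ^ (j + 1) / x))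

/-- Elliptic small weight `w_{a,b;q,p}(k)`. -/
def ew (a b q p : ℂ) (k : ℤ) : ℂ :=
  q * (theta (a * q ^ (2 * k + 1)) p * theta (b * q ^ k) p * theta (a * q ^ (k - 2) / b) p) /
    (theta (a * q ^ (2 * k - 1)) p * theta (b * q ^ (k + 2)) p * theta (a * q ^ k / b) p)

/-- Elliptic big weight `W_{a,b;q,p}(k)`. -/
def eW (a b q p : ℂ) (k : ℤ) : ℂ :=
  q ^ k *
      (theta (a * q ^ (1 + 2 * k)) p * theta (b * q) p * theta (b * q ^ (2 : ℤ)) p *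
        theta (a * q ^ (-1 : ℤ) / b) p * theta (a / b) p) /
    (theta (a * q) p * theta (b * q ^ (k + 1)) p * theta (b * q ^ (k + 2)) p *
      theta (a * q ^ (k - 1) / b) p * theta (a * q ^ k / b) p)

/-- Elliptic number `[m]_{a,b;q,p}`. -/
def en (a b q p : ℂ) (m : ℤ) : ℂ :=
  (theta (q ^ m) p * theta (a * q ^ m) p * theta (b * q ^ (2 : ℤ)) p * theta (a / b) p) /
    (theta q p * theta (a * q) p * theta (b * q ^ (m + 1)) p * theta (a * q ^ (m - 1) / b) p)

/-- The q-number `[m]_q` for an integer `m`. -/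
def qInt (q : ℂ) (m : ℤ) : ℂ := (1 - q ^ m) / (1 - q)

/-- The Q-shifted factorial `(x;Q)_m`. -/
def qPoch (x Q : ℂ) (m : ℕ) : ℂ := ∏ i ∈ Finset.range m, (1 - x * Q ^ i)

/-- The q-binomial coefficient. -/
def qBinom (q : ℂ) (n k : ℕ) : ℂ :=
  ∏ i ∈ Finset.Icc 1 k, (1 - q ^ ((n : ℤ) - (k : ℤ) + (i : ℤ))) / (1 - q ^ (i : ℤ))

/-- The a;q-number `[m]_{x;q}`. -/
def aqNum (x q : ℂ) (m : ℤ) : ℂ :=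
  q ^ (1 - m) * (1 - q ^ m) * (1 - x * q ^ m) / ((1 - q) * (1 - x * q))

/-- The a;q big weight `W_{x;q}(k)`. -/
def aqW (x q : ℂ) (k : ℤ) : ℂ := q ^ (-k) * (1 - x * q ^ (1 + 2 * k)) / (1 - x * q)

/-- The a;q small weight `w_{a;q}(k)`. -/
def waq (a q : ℂ) (k : ℤ) : ℂ := q⁻¹ * (1 - a * q ^ (2 * k + 1)) / (1 - a * q ^ (2 * k - 1))

/-! Ferrers boards and file placements (alpha-parameter model).
Cells are written `(i, j)` for column `i` (from the left) and row `j` (from the bottom),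
both `1`-indexed. -/

/-- The board `B(h 1, …, h n)`: cells `(i,j)` with `1 ≤ i ≤ n`, `1 ≤ j ≤ h i`. -/
def ferrers (n : ℕ) (h : ℕ → ℕ) : Finset (ℕ × ℕ) :=
  ((Finset.Icc 1 n) ×ˢ (Finset.Icc 1 ((Finset.Icc 1 n).sup h))).filter fun c => c.2 ≤ h c.1

/-- `k`-file placements on a board: `k` cells, at most one per column. -/
def filePl (B : Finset (ℕ × ℕ)) (k : ℕ) : Finset (Finset (ℕ × ℕ)) :=
  B.powerset.filter fun P => P.card = k ∧ ∀ c ∈ P, ∀ d ∈ P, c.1 = d.1 → c = d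

/-- `v(c)`: number of cells of `P` strictly to the left of `c` in the same row. -/
def vP (P : Finset (ℕ × ℕ)) (c : ℕ × ℕ) : ℕ := (P.filter fun d => d.1 < c.1 ∧ d.2 = c.2).card

/-- `r_c(P)`: number of cells of `P` strictly to the left of and strictly above `c`. -/
def rcP (P : Finset (ℕ × ℕ)) (c : ℕ × ℕ) : ℕ := (P.filter fun d => d.1 < c.1 ∧ c.2 < d.2).card

/-- Elliptic weight of a cell in the alpha-parameter model. -/
def cellWt (a b q p : ℂ) (α : ℤ) (P : Finset (ℕ × ℕ)) (c : ℕ × ℕ) : ℂ :=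
  if ∃ d ∈ P, d.1 = c.1 ∧ c.2 < d.2 then 1
  else
    if c ∈ P then
      en (a * q ^ (2 * (-(c.2 : ℤ) + (α - 1) * (1 - (c.1 : ℤ) + (rcP P c : ℤ)))))
        (b * q ^ (-(c.2 : ℤ) + (α - 1) * (1 - (c.1 : ℤ) + (rcP P c : ℤ)))) q p
        ((α - 1) * (vP P c : ℤ) + 1)
    else
      eW (a * q ^ (2 * (-(c.2 : ℤ) + (α - 1) * (1 - (c.1 : ℤ) + (rcP P c : ℤ)))))
        (b * q ^ (-(c.2 : ℤ) + (α - 1) * (1 - (c.1 : ℤ) + (rcP P c : ℤ)))) q p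
        ((α - 1) * (vP P c : ℤ) + 1)

/-- The elliptic alpha-parameter rook number `r_k^{(α)}(a,b;q,p;B)` for the board with
`n` columns of heights `h 1, …, h n`; it is `0` for `k < 0`. -/
def rAlpha (a b q p : ℂ) (α : ℤ) (n : ℕ) (h : ℕ → ℕ) (k : ℤ) : ℂ :=
  if 0 ≤ k then
    ∑ P ∈ filePl (ferrers n h) k.toNat, ∏ c ∈ ferrers n h, cellWt a b q p α P c
  else 0

/-- q-weight of a cell in the alpha-parameter model. -/
def qCellWt (q : ℂ) (α : ℤ) (P : Finset (ℕ × ℕ)) (c : ℕ × ℕ) : ℂ :=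
  if ∃ d ∈ P, d.1 = c.1 ∧ c.2 < d.2 then 1
  else if c ∈ P then qInt q ((α - 1) * (vP P c : ℤ) + 1)
  else q ^ ((α - 1) * (vP P c : ℤ) + 1)

/-- The q-analogue `R_k^{(α)}(q;B)` of the alpha-parameter rook numbers. -/
def Rq (q : ℂ) (α : ℤ) (n : ℕ) (h : ℕ → ℕ) (k : ℕ) : ℂ :=
  ∑ P ∈ filePl (ferrers n h) k, ∏ c ∈ ferrers n h, qCellWt q α P c

/-- a;q-weight of a cell in the α = 2 model. -/
def aqCellWt (a q : ℂ) (P : Finset (ℕ × ℕ)) (c : ℕ × ℕ) : ℂ :=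
  if ∃ d ∈ P, d.1 = c.1 ∧ c.2 < d.2 then 1
  else
    if c ∈ P then
      aqNum (a * q ^ (2 * (-(c.2 : ℤ) + 1 - (c.1 : ℤ) + (rcP P c : ℤ)))) q ((vP P c : ℤ) + 1)
    else
      aqW (a * q ^ (2 * (-(c.2 : ℤ) + 1 - (c.1 : ℤ) + (rcP P c : ℤ)))) q ((vP P c : ℤ) + 1)

/-- Heights of the staircase board `St_n = B(0,1,…,n-1)`. -/
def stH : ℕ → ℕ := fun i => i - 1

/-- `r_k^{(2)}(a,q;St_n)`. -/
def r2aq (a q : ℂ) (n k : ℕ) : ℂ :=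
  ∑ P ∈ filePl (ferrers n stH) k, ∏ c ∈ ferrers n stH, aqCellWt a q P c

/-- The 2-creation rook number `r_k^{(2)}(St_n)` of the staircase board. -/
def r2Nat (n k : ℕ) : ℕ :=
  ∑ P ∈ filePl (ferrers n stH) k,
    ∏ r ∈ Finset.Icc 1 n, (P.filter fun c => c.2 = r).card.factorial

/-! l-shifted boards and rook theory for matchings.
Cells are written `(i, j)` for row `i` and column `j` in the original labelling. -/

/-- `L j = l 1 + ⋯ + l j`. -/
def Lsum (l : ℕ → ℕ) (j : ℕ) : ℕ := ∑ s ∈ Finset.Icc 1 j, l s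

/-- The l-shifted skyline/Ferrers board `B(A 1, …, A N) ⊆ B_N^l`. -/
def lFerrers (N : ℕ) (l A : ℕ → ℕ) : Finset (ℕ × ℕ) :=
  (Finset.Icc 1 N).biUnion fun i =>
    (Finset.Icc 1 (A i)).image fun j =>
      (Lsum l N - Lsum l (N - i + 1) + 1, Lsum l N - Lsum l (N - i + 1) + 1 + j)

/-- Nonattacking condition for rook placements on shifted boards. -/
def nonatt (P : Finset (ℕ × ℕ)) : Prop :=
  ∀ c ∈ P, ∀ d ∈ P, c ≠ d → c.1 ≠ d.1 ∧ c.2 ≠ d.2 ∧ c.2 ≠ d.1 ∧ d.2 ≠ c.1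

/-- `M_k(B)`: placements of `k` nonattacking rooks on `B`. -/
def Mk (B : Finset (ℕ × ℕ)) (k : ℕ) : Finset (Finset (ℕ × ℕ)) :=
  B.powerset.filter fun P => P.card = k ∧ nonatt P

/-- A rook at `(i,j) ∈ P` cancels the cells `(i,s)` with `i < s < j` and the cells
`(t,j)` and `(t,i)` with `t < i`. -/
def cancelled (P : Finset (ℕ × ℕ)) (c : ℕ × ℕ) : Prop :=
  ∃ d ∈ P, (d.1 = c.1 ∧ d.1 < c.2 ∧ c.2 < d.2) ∨ (c.1 < d.1 ∧ (c.2 = d.2 ∨ c.2 = d.1))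

/-- The cells of `B` neither in `P` nor cancelled by a rook of `P`. -/
def uncancelled (B P : Finset (ℕ × ℕ)) : Finset (ℕ × ℕ) :=
  B.filter fun c => c ∉ P ∧ ¬cancelled P c

/-- `m_k(q;B) = Σ_P q^{u_B(P)}`. -/
def mq (q : ℂ) (B : Finset (ℕ × ℕ)) (k : ℕ) : ℂ :=
  ∑ P ∈ Mk B k, q ^ (uncancelled B P).card

/-- The w-row (bottom-to-top index) of the original row labelled `r` in `B_N^l`:
rows are labelled `L_N + 1 - L_{i'}` for the w-row `i'`. -/
def wRow (N : ℕ) (l : ℕ → ℕ) (r : ℕ) : ℕ :=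
  ((Finset.Icc 1 N).filter fun t => Lsum l t ≤ Lsum l N + 1 - r).card

/-- Number of rooks south-east of `c` both of whose cancelled columns are to the right of
the w-column of `c` (in original coordinates: row and column larger than those of `c`,
and the rook's own row label, as a column, also larger than the column of `c`). -/
def rse (P : Finset (ℕ × ℕ)) (c : ℕ × ℕ) : ℕ :=
  (P.filter fun d => c.1 < d.1 ∧ c.2 < d.2 ∧ c.2 < d.1).card

/-- Number of rooks south-east of `c` exactly one of whose cancelled columns is to the
right of the w-column of `c`. -/
def sse (P : Finset (ℕ × ℕ)) (c : ℕ × ℕ) : ℕ :=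
  (P.filter fun d => c.1 < d.1 ∧ c.2 < d.2 ∧ d.1 ≤ c.2).card

/-- The elliptic matchings number `m_k^{(l)}(a,b;q,p;B)`: for a cell of `B_N^l`
in original coordinates `(r,c)`, its w-coordinates are `i = wRow N l r` and
`j = L_N + 2 - c`, and the uncancelled cells get the small weight with argument
`i + j - 1 - l i - 2 r_{(i,j)}(P) - s_{(i,j)}(P)`. -/
def mEll (a b q p : ℂ) (N : ℕ) (l : ℕ → ℕ) (B : Finset (ℕ × ℕ)) (k : ℕ) : ℂ :=
  ∑ P ∈ Mk B k, ∏ c ∈ uncancelled B P,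
    ew a b q p ((wRow N l c.1 : ℤ) + ((Lsum l N : ℤ) + 2 - (c.2 : ℤ)) - 1
      - (l (wRow N l c.1) : ℤ) - 2 * (rse P c : ℤ) - (sse P c : ℤ))

/-- The a;q-analogue `m_k(a,q;B)` of the matchings number. -/
def mAq (a q : ℂ) (N : ℕ) (l : ℕ → ℕ) (B : Finset (ℕ × ℕ)) (k : ℕ) : ℂ :=
  ∑ P ∈ Mk B k, ∏ c ∈ uncancelled B P,
    waq a q ((wRow N l c.1 : ℤ) + ((Lsum l N : ℤ) + 2 - (c.2 : ℤ)) - 1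
      - (l (wRow N l c.1) : ℤ) - 2 * (rse P c : ℤ) - (sse P c : ℤ))

section Shift

variable {K : Type*} [Field K] {q : K}

theorem mul_zpow_mul_zpow (hq : q ≠ 0) (x : K) (m r : ℤ) : x * q ^ m * q ^ r = x * q ^ (m + r) := by
  rw [mul_assoc, ← zpow_add₀ hq]

theorem mul_zpow_div_mul_zpow (hq : q ≠ 0) (a b : K) (m j : ℤ) :
    a * q ^ m / (b * q ^ j) = a * q ^ (m - j) / b := by
  rw [zpow_sub₀ hq]
  ring

end Shift

theorem ew_shift {q : ℂ} (hq : q ≠ 0) (a b p : ℂ) (k n : ℤ) :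
    ew (a * q ^ (2 * k)) (b * q ^ k) q p n = ew a b q p (k + n) := by
  simp only [ew, mul_zpow_mul_zpow hq, mul_zpow_div_mul_zpow hq]
  ring_nf

def eWFactor (a b q p : ℂ) (k : ℤ) : ℂ :=
  theta (a * q ^ (1 + 2 * k)) p /
    (theta (b * q ^ (k + 1)) p * theta (b * q ^ (k + 2)) p *
      theta (a * q ^ (k - 1) / b) p * theta (a * q ^ k / b) p)

theorem eW_eq_zpow_mul_eWFactor_div (a b q p : ℂ) (k : ℤ) :
    eW a b q p k = q ^ k * (eWFactor a b q p k / eWFactor a b q p 0) := by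
  simp only [eW, eWFactor, mul_zero, add_zero, zero_add, zero_sub, zpow_zero, zpow_one, mul_one,
    div_div_div_eq]
  ring

theorem eWFactor_shift {q : ℂ} (hq : q ≠ 0) (a b p : ℂ) (k n : ℤ) :
    eWFactor (a * q ^ (2 * k)) (b * q ^ k) q p n = eWFactor a b q p (k + n) := by
  simp only [eWFactor, mul_zpow_mul_zpow hq, mul_zpow_div_mul_zpow hq]
  ring_nf

theorem eWFactor_ne_zero {a b q p : ℂ} {k : ℤ}
    (ha : theta (a * q ^ (2 * k + 1)) p ≠ 0)
    (hb₁ : theta (b * q ^ (k + 1)) p ≠ 0) (hb₂ : theta (b * q ^ (k + 2)) p ≠ 0)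
    (hab₁ : theta (a * q ^ (k - 1) / b) p ≠ 0) (hab₂ : theta (a * q ^ k / b) p ≠ 0) :
    eWFactor a b q p k ≠ 0 := by
  rw [eWFactor, add_comm 1]
  exact div_ne_zero ha (by simp [hb₁, hb₂, hab₁, hab₂])

theorem eW_add {q : ℂ} (hq : q ≠ 0) (a b p : ℂ) {k : ℤ} (hk : eWFactor a b q p k ≠ 0) (n : ℤ) :
    eW a b q p (k + n) = eW a b q p k * eW (a * q ^ (2 * k)) (b * q ^ k) q p n := by
  simp only [eW_eq_zpow_mul_eWFactor_div, eWFactor_shift hq, add_zero, zpow_add₀ hq]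
  field_simp

theorem elliptic_weight_shifts_general (q a b p : ℂ)
    (hq : q ≠ 0) (k n : ℤ)
    (h5 : theta (a * q ^ (2 * k + 1)) p ≠ 0)
    (h6 : theta (b * q ^ (k + 1)) p ≠ 0)
    (h7 : theta (b * q ^ (k + 2)) p ≠ 0)
    (h9 : theta (a * q ^ (k - 1) / b) p ≠ 0)
    (h10 : theta (a * q ^ k / b) p ≠ 0) :
    ew a b q p (k + n) = ew (a * q ^ (2 * k)) (b * q ^ k) q p n ∧
      eW a b q p (k + n) = eW a b q p k * eW (a * q ^ (2 * k)) (b * q ^ k) q p n :=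
  ⟨(ew_shift hq a b p k n).symm, eW_add hq a b p (eWFactor_ne_zero h5 h6 h7 h9 h10) n⟩

/-- Shift properties of the elliptic small and big weights. -/
theorem elliptic_weight_shifts (q a b p : ℂ) (hp : ‖p‖ < 1)
    (hq : q ≠ 0) (ha : a ≠ 0) (hb : b ≠ 0) (k n : ℤ)
    (h1 : theta (a * q ^ (2 * (k + n) - 1)) p ≠ 0)
    (h2 : theta (b * q ^ (k + n + 2)) p ≠ 0)
    (h3 : theta (a * q ^ (k + n) / b) p ≠ 0)
    (h4 : theta (a * q) p ≠ 0)
    (h5 : theta (a * q ^ (2 * k + 1)) p ≠ 0)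
    (h6 : theta (b * q ^ (k + 1)) p ≠ 0)
    (h7 : theta (b * q ^ (k + 2)) p ≠ 0)
    (h8 : theta (b * q ^ (k + n + 1)) p ≠ 0)
    (h9 : theta (a * q ^ (k - 1) / b) p ≠ 0)
    (h10 : theta (a * q ^ k / b) p ≠ 0)
    (h11 : theta (a * q ^ (k + n - 1) / b) p ≠ 0) :
    ew a b q p (k + n) = ew (a * q ^ (2 * k)) (b * q ^ k) q p n ∧
      eW a b q p (k + n) = eW a b q p k * eW (a * q ^ (2 * k)) (b * q ^ k) q p n :=
  elliptic_weight_shifts_general q a b p hq k n h5 h6 h7 h9 h10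

end EllRook
end
end

section
/- Let α be an integer and B = B(h_1,…,h_n) a Ferrers board. Then for every integer z, ∏_{j=1}^{n} [z + h_j + (j−1)(α−1)]_q = Σ_{k=0}^{n} R_k^{(α)}(q;B) · ∏_{i=1}^{n−k} [z + (i−1)(α−1)]_q. -/
open scoped BigOperators Classical

noncomputable section
namespace EllRook

/-! Induction on the number of columns. Because `h (n + 1)` is the largest height, every row of
a placement `P` on the first `n` columns meets the new column, so the new column contributes
`q ^ (h (n + 1) + (α - 1) k)` when it stays empty, while putting a rook at height `j` in it and
summing over `j` telescopes to `[h (n + 1) + (α - 1) k]_q`. The resulting recurrence for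
`R_k`, combined with `[a]_q + q ^ a [b]_q = [a + b]_q`, produces exactly the new factor
`[z + h (n + 1) + n (α - 1)]_q` of the left-hand side. -/

theorem qInt_add {q : ℂ} (hq : q ≠ 0) (a b : ℤ) :
    qInt q (a + b) = qInt q a + q ^ a * qInt q b := by
  unfold qInt
  rw [zpow_add₀ hq]
  ring

theorem zpow_sum₀ {G : Type*} [CommGroupWithZero G] {q : G} (hq : q ≠ 0) {ι : Type*}
    (s : Finset ι) (f : ι → ℤ) : q ^ (∑ i ∈ s, f i) = ∏ i ∈ s, q ^ f i := by
  induction s using Finset.cons_induction with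
  | empty => simp
  | cons a s ha ih => rw [Finset.sum_cons, Finset.prod_cons, zpow_add₀ hq, ih]

theorem qInt_sum_Icc {q : ℂ} (hq : q ≠ 0) (w : ℕ → ℤ) (H : ℕ) :
    qInt q (∑ j ∈ Finset.Icc 1 H, w j)
      = ∑ j ∈ Finset.Icc 1 H, qInt q (w j) * q ^ (∑ i ∈ Finset.Ioc j H, w i) := by
  induction H with
  | zero => simp [qInt]
  | succ H ih =>
    rw [Finset.sum_Icc_succ_top (by omega), add_comm, qInt_add hq, ih, Finset.mul_sum,
      Finset.sum_Icc_succ_top (by omega), add_comm, Finset.Ioc_self, Finset.sum_empty,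
      zpow_zero, mul_one]
    congr 1
    refine Finset.sum_congr rfl fun j hj => ?_
    rw [Finset.sum_Ioc_succ_top (Finset.mem_Icc.mp hj).2, zpow_add₀ hq]
    ring

theorem prod_Icc_ite_lt_eq {M : Type*} [CommMonoid M] (a b : ℕ → M) {j H : ℕ}
    (hj : j ∈ Finset.Icc 1 H) :
    ∏ i ∈ Finset.Icc 1 H, (if i < j then 1 else if i = j then a i else b i)
      = a j * ∏ i ∈ Finset.Ioc j H, b i := by
  rw [Finset.mem_Icc] at hj
  have hsplit : Finset.Icc 1 H = Finset.Icc 1 j ∪ Finset.Ioc j H := by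
    ext i
    simp only [Finset.mem_Icc, Finset.mem_union, Finset.mem_Ioc]
    omega
  have hdisj : Disjoint (Finset.Icc 1 j) (Finset.Ioc j H) := by
    rw [Finset.disjoint_left]
    intro i hi hi'
    rw [Finset.mem_Icc] at hi
    rw [Finset.mem_Ioc] at hi'
    omega
  rw [hsplit, Finset.prod_union hdisj, Finset.prod_eq_single_of_mem j (by simp [hj.1])]
  · rw [if_neg (lt_irrefl j), if_pos rfl]
    congr 1
    refine Finset.prod_congr rfl fun i hi => ?_
    rw [Finset.mem_Ioc] at hi
    rw [if_neg (by omega), if_neg (by omega)]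
  · intro i hi hij
    rw [Finset.mem_Icc] at hi
    rw [if_pos (by omega)]

theorem mem_ferrers {n : ℕ} {h : ℕ → ℕ} {c : ℕ × ℕ} :
    c ∈ ferrers n h ↔ (1 ≤ c.1 ∧ c.1 ≤ n) ∧ 1 ≤ c.2 ∧ c.2 ≤ h c.1 := by
  unfold ferrers
  simp only [Finset.mem_filter, Finset.mem_product, Finset.mem_Icc]
  constructor
  · rintro ⟨⟨hc1, hc2, -⟩, hch⟩
    exact ⟨hc1, hc2, hch⟩
  · rintro ⟨hc1, hc2, hch⟩
    exact ⟨⟨hc1, hc2, hch.trans (Finset.le_sup (Finset.mem_Icc.mpr hc1))⟩, hch⟩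

theorem ferrers_succ (n : ℕ) (h : ℕ → ℕ) :
    ferrers (n + 1) h
      = ferrers n h ∪ (Finset.Icc 1 (h (n + 1))).image (fun j => (n + 1, j)) := by
  ext ⟨i, j⟩
  simp only [mem_ferrers, Finset.mem_union, Finset.mem_image, Finset.mem_Icc, Prod.mk.injEq]
  constructor
  · rintro ⟨⟨hi1, hin⟩, hj⟩
    rcases Nat.lt_or_ge i (n + 1) with hlt | hge
    · exact Or.inl ⟨⟨hi1, by omega⟩, hj⟩
    · obtain rfl : i = n + 1 := by omega
      exact Or.inr ⟨j, hj, rfl, rfl⟩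
  · rintro (⟨⟨hi1, hin⟩, hj⟩ | ⟨j, hj, rfl, rfl⟩)
    · exact ⟨⟨hi1, by omega⟩, hj⟩
    · exact ⟨⟨by omega, le_rfl⟩, hj⟩

theorem prod_ferrers_succ {M : Type*} [CommMonoid M] (n : ℕ) (h : ℕ → ℕ) (f : ℕ × ℕ → M) :
    ∏ c ∈ ferrers (n + 1) h, f c
      = (∏ c ∈ ferrers n h, f c) * ∏ j ∈ Finset.Icc 1 (h (n + 1)), f (n + 1, j) := by
  have hdisj : Disjoint (ferrers n h) ((Finset.Icc 1 (h (n + 1))).image fun j => (n + 1, j)) := by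
    rw [Finset.disjoint_left]
    rintro c hc hc'
    obtain ⟨j, -, rfl⟩ := Finset.mem_image.mp hc'
    have := (mem_ferrers.mp hc).1.2
    omega
  rw [ferrers_succ, Finset.prod_union hdisj,
    Finset.prod_image fun _ _ _ _ hij => (Prod.mk.inj hij).2]

theorem mem_filePl {B P : Finset (ℕ × ℕ)} {k : ℕ} :
    P ∈ filePl B k ↔ P ⊆ B ∧ P.card = k ∧ ∀ c ∈ P, ∀ d ∈ P, c.1 = d.1 → c = d := by
  simp [filePl]

theorem filePl_zero (B : Finset (ℕ × ℕ)) : filePl B 0 = {∅} := by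
  ext P
  simp only [mem_filePl, Finset.mem_singleton, Finset.card_eq_zero]
  constructor
  · exact fun hP => hP.2.1
  · rintro rfl
    simp

theorem card_le_of_mem_filePl_ferrers {n k : ℕ} {h : ℕ → ℕ} {P : Finset (ℕ × ℕ)}
    (hP : P ∈ filePl (ferrers n h) k) : k ≤ n := by
  obtain ⟨hsub, rfl, hfile⟩ := mem_filePl.mp hP
  simpa using Finset.card_le_card_of_injOn Prod.fst
    (t := Finset.Icc 1 n) (fun c hc => Finset.mem_Icc.mpr (mem_ferrers.mp (hsub hc)).1)
    (fun c hc d hd => hfile c hc d hd)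

theorem Rq_eq_zero_of_lt (q : ℂ) (α : ℤ) (h : ℕ → ℕ) {n k : ℕ} (hnk : n < k) :
    Rq q α n h k = 0 :=
  Finset.sum_eq_zero fun _ hP => absurd (card_le_of_mem_filePl_ferrers hP) (by omega)

theorem mem_filePl_ferrers_of_forall_ne {n k : ℕ} {h : ℕ → ℕ} {P : Finset (ℕ × ℕ)}
    (hP : P ∈ filePl (ferrers (n + 1) h) k) (hcol : ∀ c ∈ P, c.1 ≠ n + 1) :
    P ∈ filePl (ferrers n h) k := by
  obtain ⟨hsub, hcard, hfile⟩ := mem_filePl.mp hP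
  refine mem_filePl.mpr ⟨fun c hc => ?_, hcard, hfile⟩
  have := mem_ferrers.mp (hsub hc)
  have := hcol c hc
  exact mem_ferrers.mpr ⟨⟨by omega, by omega⟩, by omega, by omega⟩

theorem filePl_ferrers_subset_succ (n k : ℕ) (h : ℕ → ℕ) :
    filePl (ferrers n h) k ⊆ filePl (ferrers (n + 1) h) k := by
  intro P hP
  obtain ⟨hsub, hcard, hfile⟩ := mem_filePl.mp hP
  refine mem_filePl.mpr ⟨fun c hc => ?_, hcard, hfile⟩
  rw [ferrers_succ]
  exact Finset.mem_union_left _ (hsub hc)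

theorem insert_mem_filePl_ferrers_succ {n k j : ℕ} {h : ℕ → ℕ} {P : Finset (ℕ × ℕ)}
    (hP : P ∈ filePl (ferrers n h) k) (hj : j ∈ Finset.Icc 1 (h (n + 1))) :
    insert (n + 1, j) P ∈ filePl (ferrers (n + 1) h) (k + 1) := by
  obtain ⟨hsub, hcard, hfile⟩ := mem_filePl.mp (filePl_ferrers_subset_succ n k h hP)
  have hcols : ∀ c ∈ P, c.1 ≤ n := fun c hc => (mem_ferrers.mp ((mem_filePl.mp hP).1 hc)).1.2
  have hnew : (n + 1, j) ∉ P := fun hmem => by have := hcols _ hmem; simp at this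
  refine mem_filePl.mpr ⟨Finset.insert_subset ?_ hsub, ?_, ?_⟩
  · rw [ferrers_succ]
    exact Finset.mem_union_right _ (Finset.mem_image_of_mem _ hj)
  · rw [Finset.card_insert_of_notMem hnew, hcard]
  · simp only [Finset.mem_insert]
    rintro c (rfl | hc) d (rfl | hd) hcd
    · rfl
    · exact absurd hcd (by have := hcols d hd; simp only; omega)
    · exact absurd hcd (by have := hcols c hc; simp only; omega)
    · exact hfile c hc d hd hcd

theorem filePl_ferrers_succ (n k : ℕ) (h : ℕ → ℕ) :
    filePl (ferrers (n + 1) h) (k + 1)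
      = filePl (ferrers n h) (k + 1)
        ∪ (filePl (ferrers n h) k ×ˢ Finset.Icc 1 (h (n + 1))).image
            fun x => insert (n + 1, x.2) x.1 := by
  ext P
  simp only [Finset.mem_union, Finset.mem_image, Finset.mem_product, Prod.exists]
  constructor
  · intro hP
    by_cases hcol : ∀ c ∈ P, c.1 ≠ n + 1
    · exact Or.inl (mem_filePl_ferrers_of_forall_ne hP hcol)
    push Not at hcol
    obtain ⟨c, hc, hcn⟩ := hcol
    obtain ⟨hsub, hcard, hfile⟩ := mem_filePl.mp hP
    have hcB := mem_ferrers.mp (hsub hc)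
    have hP' : P.erase c ∈ filePl (ferrers (n + 1) h) k := by
      refine mem_filePl.mpr ⟨(Finset.erase_subset c P).trans hsub, ?_, fun a ha b hb =>
        hfile a (Finset.mem_of_mem_erase ha) b (Finset.mem_of_mem_erase hb)⟩
      rw [Finset.card_erase_of_mem hc, hcard, Nat.add_sub_cancel]
    refine Or.inr ⟨P.erase c, c.2, ⟨mem_filePl_ferrers_of_forall_ne hP' fun d hd hdn => ?_,
      Finset.mem_Icc.mpr ⟨hcB.2.1, hcn ▸ hcB.2.2⟩⟩, ?_⟩
    · exact Finset.ne_of_mem_erase hd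
        (hfile d (Finset.mem_of_mem_erase hd) c hc (hdn.trans hcn.symm))
    · rw [← hcn, Finset.insert_erase hc]
  · rintro (hP | ⟨P, j, ⟨hP, hj⟩, rfl⟩)
    · exact filePl_ferrers_subset_succ n (k + 1) h hP
    · exact insert_mem_filePl_ferrers_succ hP hj

theorem sum_filePl_ferrers_succ {M : Type*} [AddCommMonoid M] (n k : ℕ) (h : ℕ → ℕ)
    (f : Finset (ℕ × ℕ) → M) :
    ∑ P ∈ filePl (ferrers (n + 1) h) (k + 1), f P
      = ∑ P ∈ filePl (ferrers n h) (k + 1), f P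
        + ∑ P ∈ filePl (ferrers n h) k, ∑ j ∈ Finset.Icc 1 (h (n + 1)),
            f (insert (n + 1, j) P) := by
  have hcols : ∀ {m : ℕ} {P : Finset (ℕ × ℕ)}, P ∈ filePl (ferrers n h) m → ∀ c ∈ P, c.1 ≤ n :=
    fun hP c hc => (mem_ferrers.mp ((mem_filePl.mp hP).1 hc)).1.2
  have hdisj : Disjoint (filePl (ferrers n h) (k + 1))
      ((filePl (ferrers n h) k ×ˢ Finset.Icc 1 (h (n + 1))).image
        fun x => insert (n + 1, x.2) x.1) := by
    rw [Finset.disjoint_right]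
    rintro _ hP hP'
    obtain ⟨⟨P, j⟩, -, rfl⟩ := Finset.mem_image.mp hP
    have := hcols hP' _ (Finset.mem_insert_self _ _)
    simp at this
  have hinj : Set.InjOn (fun x : Finset (ℕ × ℕ) × ℕ => insert (n + 1, x.2) x.1)
      (filePl (ferrers n h) k ×ˢ Finset.Icc 1 (h (n + 1)) : Finset _) := by
    rintro ⟨P, j⟩ hx ⟨P', j'⟩ hy heq
    simp only [Finset.coe_product, Set.mem_prod, Finset.mem_coe] at hx hy heq
    have hnotMem : ∀ {Q : Finset (ℕ × ℕ)} {i : ℕ}, Q ∈ filePl (ferrers n h) k → (n + 1, i) ∉ Q :=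
      fun hQ hi => by have := hcols hQ _ hi; simp at this
    have hjj : j' = j := by
      have hmem : (n + 1, j') ∈ insert (n + 1, j) P := heq ▸ Finset.mem_insert_self _ _
      rcases Finset.mem_insert.mp hmem with hj | hmem
      · exact (Prod.mk.inj hj).2
      · exact absurd hmem (hnotMem hx.1)
    subst hjj
    have := congrArg (Finset.erase · (n + 1, j')) heq
    simp only [Finset.erase_insert (hnotMem hx.1), Finset.erase_insert (hnotMem hy.1)] at this
    rw [this]
  rw [filePl_ferrers_succ, Finset.sum_union hdisj, Finset.sum_image hinj, Finset.sum_product]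

def rowCount (P : Finset (ℕ × ℕ)) (j : ℕ) : ℕ := (P.filter fun d => d.2 = j).card

theorem sum_rowCount {P : Finset (ℕ × ℕ)} {H : ℕ} (hrows : ∀ d ∈ P, d.2 ∈ Finset.Icc 1 H) :
    ∑ j ∈ Finset.Icc 1 H, rowCount P j = P.card :=
  (Finset.card_eq_sum_card_fiberwise hrows).symm

theorem vP_insert_of_not_lt {P : Finset (ℕ × ℕ)} {c x : ℕ × ℕ} (hx : ¬x.1 < c.1) :
    vP (insert x P) c = vP P c := by
  unfold vP
  rw [Finset.filter_insert, if_neg fun hxc => hx hxc.1]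

theorem vP_of_forall_lt {P : Finset (ℕ × ℕ)} {c : ℕ × ℕ} (hP : ∀ d ∈ P, d.1 < c.1) :
    vP P c = rowCount P c.2 := by
  unfold vP rowCount
  congr 1
  exact Finset.filter_congr fun d hd => and_iff_right (hP d hd)

theorem qCellWt_insert_of_lt (q : ℂ) (α : ℤ) {P : Finset (ℕ × ℕ)} {c x : ℕ × ℕ}
    (hx : c.1 < x.1) : qCellWt q α (insert x P) c = qCellWt q α P c := by
  have habove : (∃ d ∈ insert x P, d.1 = c.1 ∧ c.2 < d.2) ↔ ∃ d ∈ P, d.1 = c.1 ∧ c.2 < d.2 := by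
    simp only [Finset.mem_insert, exists_eq_or_imp, or_iff_right_iff_imp]
    rintro ⟨hxc, -⟩
    omega
  have hmem : c ∈ insert x P ↔ c ∈ P := by
    rw [Finset.mem_insert, or_iff_right]
    rintro rfl
    omega
  unfold qCellWt
  rw [vP_insert_of_not_lt (by omega)]
  simp only [habove, hmem]

theorem qCellWt_of_forall_lt (q : ℂ) (α : ℤ) {P : Finset (ℕ × ℕ)} {c : ℕ × ℕ}
    (hP : ∀ d ∈ P, d.1 < c.1) :
    qCellWt q α P c = q ^ ((α - 1) * (rowCount P c.2 : ℤ) + 1) := by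
  unfold qCellWt
  rw [if_neg fun ⟨d, hd, hdc, _⟩ => (hP d hd).ne hdc, if_neg fun hc => (hP c hc).false,
    vP_of_forall_lt hP]

theorem qCellWt_insert_of_forall_lt (q : ℂ) (α : ℤ) {P : Finset (ℕ × ℕ)} {i : ℕ}
    (hP : ∀ d ∈ P, d.1 < i) (j j' : ℕ) :
    qCellWt q α (insert (i, j) P) (i, j')
      = if j' < j then 1
        else if j' = j then qInt q ((α - 1) * (rowCount P j' : ℤ) + 1)
        else q ^ ((α - 1) * (rowCount P j' : ℤ) + 1) := by
  have habove : (∃ d ∈ insert (i, j) P, d.1 = i ∧ j' < d.2) ↔ j' < j := by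
    simp only [Finset.mem_insert, exists_eq_or_imp, true_and, or_iff_left_iff_imp]
    rintro ⟨d, hd, hdi, -⟩
    exact absurd hdi (hP d hd).ne
  have hmem : (i, j') ∈ insert (i, j) P ↔ j' = j := by
    rw [Finset.mem_insert, or_iff_left fun hc => (hP _ hc).false, Prod.mk.injEq]
    simp
  unfold qCellWt
  rw [vP_insert_of_not_lt (lt_irrefl i), vP_of_forall_lt hP]
  simp only [habove, hmem]

section Column

variable (q : ℂ) (α : ℤ) {P : Finset (ℕ × ℕ)} {i H : ℕ}

theorem sum_mul_rowCount_add_one (hrows : ∀ d ∈ P, d.2 ∈ Finset.Icc 1 H) :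
    ∑ j ∈ Finset.Icc 1 H, ((α - 1) * (rowCount P j : ℤ) + 1) = H + (α - 1) * P.card := by
  rw [Finset.sum_add_distrib, ← Finset.mul_sum, ← Nat.cast_sum, sum_rowCount hrows]
  simp only [Finset.sum_const, Nat.card_Icc, nsmul_eq_mul, mul_one]
  push_cast
  ring

theorem prod_qCellWt_column (hq : q ≠ 0) (hcols : ∀ d ∈ P, d.1 < i)
    (hrows : ∀ d ∈ P, d.2 ∈ Finset.Icc 1 H) :
    ∏ j ∈ Finset.Icc 1 H, qCellWt q α P (i, j) = q ^ ((H : ℤ) + (α - 1) * P.card) := by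
  rw [Finset.prod_congr rfl fun j _ => qCellWt_of_forall_lt q α (c := (i, j)) hcols,
    ← zpow_sum₀ hq, sum_mul_rowCount_add_one α hrows]

theorem sum_prod_qCellWt_insert_column (hq : q ≠ 0) (hcols : ∀ d ∈ P, d.1 < i)
    (hrows : ∀ d ∈ P, d.2 ∈ Finset.Icc 1 H) :
    ∑ j ∈ Finset.Icc 1 H, ∏ j' ∈ Finset.Icc 1 H, qCellWt q α (insert (i, j) P) (i, j')
      = qInt q ((H : ℤ) + (α - 1) * P.card) := by
  rw [← sum_mul_rowCount_add_one α hrows, qInt_sum_Icc hq]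
  refine Finset.sum_congr rfl fun j hj => ?_
  rw [Finset.prod_congr rfl fun j' _ => qCellWt_insert_of_forall_lt q α hcols j j',
    prod_Icc_ite_lt_eq _ _ hj, zpow_sum₀ hq]

end Column

section Recurrence

variable {q : ℂ} (α : ℤ) {n : ℕ} {h : ℕ → ℕ}

theorem rows_mem_Icc_of_mem_filePl (hmn : ∀ i, 1 ≤ i → i ≤ n → h i ≤ h (n + 1)) {k : ℕ}
    {P : Finset (ℕ × ℕ)} (hP : P ∈ filePl (ferrers n h) k) :
    ∀ d ∈ P, d.2 ∈ Finset.Icc 1 (h (n + 1)) := by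
  intro d hd
  have hd := mem_ferrers.mp ((mem_filePl.mp hP).1 hd)
  have := hmn d.1 hd.1.1 hd.1.2
  exact Finset.mem_Icc.mpr ⟨hd.2.1, by omega⟩

theorem cols_lt_of_mem_filePl {k : ℕ} {P : Finset (ℕ × ℕ)}
    (hP : P ∈ filePl (ferrers n h) k) : ∀ d ∈ P, d.1 < n + 1 := by
  intro d hd
  exact Nat.lt_succ_of_le (mem_ferrers.mp ((mem_filePl.mp hP).1 hd)).1.2

theorem prod_qCellWt_ferrers_succ (hq : q ≠ 0) (hmn : ∀ i, 1 ≤ i → i ≤ n → h i ≤ h (n + 1))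
    {k : ℕ} {P : Finset (ℕ × ℕ)} (hP : P ∈ filePl (ferrers n h) k) :
    ∏ c ∈ ferrers (n + 1) h, qCellWt q α P c
      = (∏ c ∈ ferrers n h, qCellWt q α P c) * q ^ ((h (n + 1) : ℤ) + (α - 1) * k) := by
  rw [prod_ferrers_succ, prod_qCellWt_column q α hq (cols_lt_of_mem_filePl hP)
    (rows_mem_Icc_of_mem_filePl hmn hP), (mem_filePl.mp hP).2.1]

theorem sum_prod_qCellWt_ferrers_succ_insert (hq : q ≠ 0)
    (hmn : ∀ i, 1 ≤ i → i ≤ n → h i ≤ h (n + 1)) {k : ℕ} {P : Finset (ℕ × ℕ)}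
    (hP : P ∈ filePl (ferrers n h) k) :
    ∑ j ∈ Finset.Icc 1 (h (n + 1)), ∏ c ∈ ferrers (n + 1) h, qCellWt q α (insert (n + 1, j) P) c
      = (∏ c ∈ ferrers n h, qCellWt q α P c) * qInt q ((h (n + 1) : ℤ) + (α - 1) * k) := by
  have hcols := cols_lt_of_mem_filePl hP
  simp only [prod_ferrers_succ]
  rw [← (mem_filePl.mp hP).2.1, ← sum_prod_qCellWt_insert_column q α hq hcols
    (rows_mem_Icc_of_mem_filePl hmn hP), Finset.mul_sum]
  refine Finset.sum_congr rfl fun j _ => ?_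
  congr 1
  refine Finset.prod_congr rfl fun c hc => qCellWt_insert_of_lt q α ?_
  have := (mem_ferrers.mp hc).1.2
  simp only
  omega

theorem Rq_succ_zero (hq : q ≠ 0) (hmn : ∀ i, 1 ≤ i → i ≤ n → h i ≤ h (n + 1)) :
    Rq q α (n + 1) h 0 = Rq q α n h 0 * q ^ (h (n + 1) : ℤ) := by
  have hempty : ∅ ∈ filePl (ferrers n h) 0 := by simp [filePl_zero]
  unfold Rq
  rw [filePl_zero, filePl_zero, Finset.sum_singleton, Finset.sum_singleton,
    prod_qCellWt_ferrers_succ α hq hmn hempty, Nat.cast_zero, mul_zero, add_zero]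

theorem Rq_succ_succ (hq : q ≠ 0) (hmn : ∀ i, 1 ≤ i → i ≤ n → h i ≤ h (n + 1)) (k : ℕ) :
    Rq q α (n + 1) h (k + 1)
      = Rq q α n h (k + 1) * q ^ ((h (n + 1) : ℤ) + (α - 1) * (k + 1 : ℕ))
        + Rq q α n h k * qInt q ((h (n + 1) : ℤ) + (α - 1) * k) := by
  unfold Rq
  rw [sum_filePl_ferrers_succ, Finset.sum_mul, Finset.sum_mul]
  congr 1
  · exact Finset.sum_congr rfl fun P hP => prod_qCellWt_ferrers_succ α hq hmn hP
  · exact Finset.sum_congr rfl fun P hP => sum_prod_qCellWt_ferrers_succ_insert α hq hmn hP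

theorem sum_Rq_succ_mul (hq : q ≠ 0)
    (hmn : ∀ i, 1 ≤ i → i ≤ n → h i ≤ h (n + 1)) (f : ℕ → ℂ) :
    ∑ k ∈ Finset.range (n + 2), Rq q α (n + 1) h k * f k
      = ∑ k ∈ Finset.range (n + 1), Rq q α n h k
          * (q ^ ((h (n + 1) : ℤ) + (α - 1) * k) * f k
            + qInt q ((h (n + 1) : ℤ) + (α - 1) * k) * f (k + 1)) := by
  set g : ℕ → ℂ := fun k => Rq q α n h k * (q ^ ((h (n + 1) : ℤ) + (α - 1) * k) * f k)
  have hshift : ∑ k ∈ Finset.range (n + 1), g k = ∑ k ∈ Finset.range (n + 1), g (k + 1) + g 0 := by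
    rw [Finset.sum_range_succ (fun k => g (k + 1)), Finset.sum_range_succ' g]
    simp [g, Rq_eq_zero_of_lt q α h (Nat.lt_succ_self n)]
  simp only [mul_add, Finset.sum_add_distrib]
  rw [hshift, Finset.sum_range_succ', Rq_succ_zero α hq hmn]
  simp only [g, Rq_succ_succ α hq hmn, add_mul, Finset.sum_add_distrib, mul_assoc,
    Nat.cast_zero, mul_zero, add_zero]
  push_cast
  ring

end Recurrence

def qAlphaProd (q : ℂ) (α z : ℤ) (m : ℕ) : ℂ :=
  ∏ i ∈ Finset.Icc 1 m, qInt q (z + ((i : ℤ) - 1) * (α - 1))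

theorem qAlphaProd_succ (q : ℂ) (α z : ℤ) (m : ℕ) :
    qAlphaProd q α z (m + 1) = qAlphaProd q α z m * qInt q (z + m * (α - 1)) := by
  rw [qAlphaProd, Finset.prod_Icc_succ_top (by omega), Nat.cast_succ, add_sub_cancel_right]
  rfl

theorem zpow_mul_qAlphaProd_succ_add {q : ℂ} (hq : q ≠ 0) (α z a : ℤ) (m : ℕ) :
    q ^ a * qAlphaProd q α z (m + 1) + qInt q a * qAlphaProd q α z m
      = qAlphaProd q α z m * qInt q (a + (z + m * (α - 1))) := by
  rw [qAlphaProd_succ, qInt_add hq a]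
  ring

theorem q_alpha_factorization_general (q : ℂ) (hq : q ≠ 0)
    (α : ℤ) (n : ℕ) (h : ℕ → ℕ)
    (hmono : ∀ i j, 1 ≤ i → i ≤ j → j ≤ n → h i ≤ h j)
    (z : ℤ) :
    ∏ j ∈ Finset.Icc 1 n, qInt q (z + (h j : ℤ) + ((j : ℤ) - 1) * (α - 1))
      = ∑ k ∈ Finset.range (n + 1),
          Rq q α n h k
            * ∏ i ∈ Finset.Icc 1 (n - k), qInt q (z + ((i : ℤ) - 1) * (α - 1)) := by
  change _ = ∑ k ∈ Finset.range (n + 1), Rq q α n h k * qAlphaProd q α z (n - k)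
  induction n with
  | zero => simp [Rq, filePl_zero, qAlphaProd, ferrers]
  | succ n ih =>
    have hmn : ∀ i, 1 ≤ i → i ≤ n → h i ≤ h (n + 1) := fun i hi _ =>
      hmono i (n + 1) hi (by omega) le_rfl
    rw [Finset.prod_Icc_succ_top (by omega), ih fun i j hi hij hjn => hmono i j hi hij (by omega),
      sum_Rq_succ_mul α hq hmn, Finset.sum_mul]
    refine Finset.sum_congr rfl fun k hk => ?_
    obtain ⟨m, rfl⟩ : ∃ m, n = k + m :=
      Nat.exists_eq_add_of_le (Nat.lt_succ_iff.mp (Finset.mem_range.mp hk))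
    rw [show k + m + 1 - k = m + 1 by omega, show k + m + 1 - (k + 1) = m by omega,
      Nat.add_sub_cancel_left, mul_assoc, zpow_mul_qAlphaProd_succ_add hq]
    congr 3
    push_cast
    ring

/-- q-analogue of the alpha-factorization theorem. -/
theorem q_alpha_factorization (q : ℂ) (hq : q ≠ 0) (hq1 : q ≠ 1)
    (α : ℤ) (n : ℕ) (h : ℕ → ℕ)
    (hmono : ∀ i j, 1 ≤ i → i ≤ j → j ≤ n → h i ≤ h j)
    (z : ℤ) :
    ∏ j ∈ Finset.Icc 1 n, qInt q (z + (h j : ℤ) + ((j : ℤ) - 1) * (α - 1))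
      = ∑ k ∈ Finset.range (n + 1),
          Rq q α n h k
            * ∏ i ∈ Finset.Icc 1 (n - k), qInt q (z + ((i : ℤ) - 1) * (α - 1)) :=
  q_alpha_factorization_general q hq α n h hmono z

end EllRook
end
end

section
/- Let l = (l_1,…,l_N) be a vector of positive integers and B = B(a_1,…,a_N) an l-shifted Ferrers board contained in B_N^l. Then m_N^{(l)}(q;B) = ∏_{i=1}^{N} [a_{N−i+1} − 2i + 2]_q. In particular, for the full l-shifted board B_N^l (corresponding to a_i = L_{N−i+1}), m_N^{(l)}(q;B_N^l) = ∏_{i=1}^{N} [L_i − 2i + 2]_q. -/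
open scoped BigOperators Classical

noncomputable section
namespace EllRook

/-!
Peel off the row with the smallest label. Every other cell lies strictly below it and inside
its range of columns, and the remaining `N - 1` rows cannot carry `N` rooks, so each full
placement consists of one rook in that top row and a full placement `P'` of the lower rows.
The `k` rooks of `P'` occupy `2 k` distinct columns of the top row's range (their own columns
and their row labels), leaving `α - 2 k` free columns. A top rook in the free column `j` leaves
uncancelled exactly the free columns to the right of `j` in its row and changes nothing below,
so summing over `j` contributes the factor `[α - 2 k]_q`; induction on the rows gives the
product.
-/

open Finset

lemma qInt_zero (q : ℂ) : qInt q 0 = 0 := by simp [qInt]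

lemma qInt_natCast {q : ℂ} (hq1 : q ≠ 1) (n : ℕ) : qInt q n = ∑ i ∈ range n, q ^ i := by
  rw [qInt, geom_sum_eq hq1, zpow_natCast, ← neg_sub, ← neg_sub q, neg_div_neg_eq]

lemma sum_pow_card_filter_lt (q : ℂ) (S : Finset ℕ) :
    ∑ j ∈ S, q ^ #(S.filter (j < ·)) = ∑ i ∈ range #S, q ^ i := by
  induction S using Finset.induction_on_max with
  | empty => simp
  | insert a s ha ih =>
    have ha' : a ∉ s := fun h => (ha a h).false
    have h_top : (insert a s).filter (a < ·) = ∅ := by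
      simp only [filter_eq_empty_iff, mem_insert]
      rintro x (rfl | hx) <;> [exact lt_irrefl x; exact (ha x hx).not_gt]
    have h_below : ∀ j ∈ s, #((insert a s).filter (j < ·)) = #(s.filter (j < ·)) + 1 := by
      intro j hj
      rw [filter_insert, if_pos (ha j hj), card_insert_of_notMem (by simp [ha'])]
    rw [sum_insert ha', card_insert_of_notMem ha', sum_range_succ', h_top, sum_congr rfl
      fun j hj => by rw [h_below j hj, pow_succ], ← sum_mul, ih]
    simp [sum_mul, pow_succ, add_comm]

def rowB (r m : ℕ) : Finset (ℕ × ℕ) := (Icc (r + 1) (r + m)).image (Prod.mk r)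

lemma mem_rowB {r m : ℕ} {c : ℕ × ℕ} : c ∈ rowB r m ↔ c.1 = r ∧ r < c.2 ∧ c.2 ≤ r + m := by
  obtain ⟨c₁, c₂⟩ := c
  simp only [rowB, mem_image, mem_Icc, Prod.mk.injEq]
  constructor
  · rintro ⟨x, ⟨h₁, h₂⟩, rfl, rfl⟩
    exact ⟨rfl, h₁, h₂⟩
  · rintro ⟨rfl, h₁, h₂⟩
    exact ⟨c₂, ⟨h₁, h₂⟩, rfl, rfl⟩

section Placements

variable {B P : Finset (ℕ × ℕ)} {k : ℕ}

lemma mem_Mk : P ∈ Mk B k ↔ P ⊆ B ∧ #P = k ∧ nonatt P := by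
  simp [Mk]

lemma nonatt_insert {c : ℕ × ℕ} :
    nonatt (insert c P) ↔ nonatt P ∧
      ∀ d ∈ P, c ≠ d → c.1 ≠ d.1 ∧ c.2 ≠ d.2 ∧ c.2 ≠ d.1 ∧ d.2 ≠ c.1 := by
  constructor
  · intro h
    exact ⟨fun x hx y hy => h x (mem_insert_of_mem hx) y (mem_insert_of_mem hy),
      fun d hd => h c (mem_insert_self c P) d (mem_insert_of_mem hd)⟩
  · rintro ⟨hP, hc⟩ x hx y hy hxy
    rw [mem_insert] at hx hy
    rcases hx with rfl | hx <;> rcases hy with rfl | hy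
    · exact absurd rfl hxy
    · exact hc y hy hxy
    · obtain ⟨h₁, h₂, h₃, h₄⟩ := hc x hx hxy.symm
      exact ⟨h₁.symm, h₂.symm, h₄, h₃⟩
    · exact hP x hx y hy hxy

lemma injOn_fst_of_nonatt (h : nonatt P) : Set.InjOn Prod.fst (P : Set (ℕ × ℕ)) :=
  fun c hc d hd hcd => by_contra fun hne => (h c hc d hd hne).1 hcd

lemma injOn_snd_of_nonatt (h : nonatt P) : Set.InjOn Prod.snd (P : Set (ℕ × ℕ)) :=
  fun c hc d hd hcd => by_contra fun hne => (h c hc d hd hne).2.1 hcd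

lemma le_card_image_fst_of_mem_Mk (hP : P ∈ Mk B k) : k ≤ #(B.image Prod.fst) := by
  obtain ⟨hPB, rfl, hna⟩ := mem_Mk.mp hP
  rw [← card_image_of_injOn (injOn_fst_of_nonatt hna)]
  exact card_le_card (image_subset_image hPB)

lemma mq_eq_zero_of_card_image_fst_lt (q : ℂ) (h : #(B.image Prod.fst) < k) : mq q B k = 0 :=
  sum_eq_zero fun _ hP => absurd (le_card_image_fst_of_mem_Mk hP) h.not_ge

lemma cancelled_insert {c d : ℕ × ℕ} :
    cancelled (insert d P) c ↔
      ((d.1 = c.1 ∧ d.1 < c.2 ∧ c.2 < d.2) ∨ (c.1 < d.1 ∧ (c.2 = d.2 ∨ c.2 = d.1))) ∨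
        cancelled P c := by
  simp only [cancelled, exists_mem_insert]

end Placements

def freeCols (r α : ℕ) (P : Finset (ℕ × ℕ)) : Finset ℕ :=
  Icc (r + 1) (r + α) \ (P.image Prod.fst ∪ P.image Prod.snd)

lemma mem_freeCols {r α j : ℕ} {P : Finset (ℕ × ℕ)} :
    j ∈ freeCols r α P ↔ (r < j ∧ j ≤ r + α) ∧ ∀ d ∈ P, d.1 ≠ j ∧ d.2 ≠ j := by
  simp only [freeCols, mem_sdiff, mem_Icc, Nat.succ_le_iff, mem_union, mem_image, not_or,
    not_exists, not_and, ← forall_and]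

section TopRow

variable {r α k : ℕ} {B P : Finset (ℕ × ℕ)}

lemma card_freeCols_add (hB : ∀ c ∈ B, r < c.1 ∧ c.1 < c.2 ∧ c.2 ≤ r + α) (hP : P ∈ Mk B k) :
    #(freeCols r α P) + 2 * k = α := by
  obtain ⟨hPB, rfl, hna⟩ := mem_Mk.mp hP
  have h_sub : P.image Prod.fst ∪ P.image Prod.snd ⊆ Icc (r + 1) (r + α) := by
    simp only [union_subset_iff, image_subset_iff, mem_Icc]
    constructor <;> intro c hc <;> have := hB c (hPB hc) <;> omega
  have h_disj : Disjoint (P.image Prod.fst) (P.image Prod.snd) := by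
    simp only [disjoint_left, mem_image, not_exists, not_and]
    rintro _ ⟨c, hc, rfl⟩ d hd hdc
    obtain rfl | hne := eq_or_ne d c
    · have := hB d (hPB hd); omega
    · exact (hna d hd c hc hne).2.2.1 hdc
  have h_card := card_sdiff_add_card_eq_card h_sub
  rw [card_union_of_disjoint h_disj, card_image_of_injOn (injOn_fst_of_nonatt hna),
    card_image_of_injOn (injOn_snd_of_nonatt hna), Nat.card_Icc] at h_card
  rw [freeCols]
  omega

lemma insert_rowCell_inj {P₁ P₂ : Finset (ℕ × ℕ)} {j₁ j₂ : ℕ} (h₁ : ∀ c ∈ P₁, c.1 ≠ r)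
    (h₂ : ∀ c ∈ P₂, c.1 ≠ r) (h : insert (r, j₁) P₁ = insert (r, j₂) P₂) :
    j₁ = j₂ ∧ P₁ = P₂ := by
  have h_erase : ∀ {Q : Finset (ℕ × ℕ)} {j : ℕ}, (∀ c ∈ Q, c.1 ≠ r) →
      (insert (r, j) Q).filter (·.1 ≠ r) = Q := fun hQ => by
    rw [filter_insert, if_neg (not_not.mpr rfl), filter_true_of_mem hQ]
  refine ⟨?_, by rw [← h_erase h₁, ← h_erase h₂, h]⟩
  have h_mem : (r, j₁) ∈ insert (r, j₂) P₂ := h ▸ mem_insert_self _ _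
  rcases mem_insert.mp h_mem with h_eq | h_mem
  · exact congrArg Prod.snd h_eq
  · exact absurd rfl (h₂ _ h_mem)

lemma exists_mem_rowB_of_mem_Mk (hrows : #(B.image Prod.fst) ≤ k) {Q : Finset (ℕ × ℕ)}
    (hQ : Q ∈ Mk (rowB r α ∪ B) (k + 1)) : ∃ c ∈ Q, c ∈ rowB r α := by
  by_contra! h
  obtain ⟨hQB, hQk, hna⟩ := mem_Mk.mp hQ
  have hQB' : Q ⊆ B := fun c hc => (mem_union.mp (hQB hc)).resolve_left (h c hc)
  have := le_card_image_fst_of_mem_Mk (mem_Mk.mpr ⟨hQB', hQk, hna⟩)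
  omega

lemma Mk_rowB_union (hB : ∀ c ∈ B, r < c.1 ∧ c.1 < c.2 ∧ c.2 ≤ r + α)
    (hrows : #(B.image Prod.fst) ≤ k) :
    Mk (rowB r α ∪ B) (k + 1) =
      (Mk B k).biUnion fun P => (freeCols r α P).image fun j => insert (r, j) P := by
  ext Q
  simp only [mem_biUnion, mem_image]
  constructor
  · intro hQ
    obtain ⟨c, hcQ, hc⟩ := exists_mem_rowB_of_mem_Mk hrows hQ
    obtain ⟨rfl, hc₂, hc₂'⟩ := mem_rowB.mp hc
    obtain ⟨hQB, hQk, hna⟩ := mem_Mk.mp hQ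
    rw [← insert_erase hcQ, nonatt_insert] at hna
    have hPB : Q.erase c ⊆ B := fun d hd => by
      refine (mem_union.mp (hQB (mem_of_mem_erase hd))).resolve_left fun hd' => ?_
      exact (hna.2 d hd (ne_of_mem_erase hd).symm).1 (mem_rowB.mp hd').1.symm
    refine ⟨Q.erase c, mem_Mk.mpr ⟨hPB, ?_, hna.1⟩, c.2, ?_, insert_erase hcQ⟩
    · rw [card_erase_of_mem hcQ, hQk, Nat.add_sub_cancel]
    · refine mem_freeCols.mpr ⟨⟨hc₂, hc₂'⟩, fun d hd => ?_⟩
      obtain ⟨-, h₂, h₃, -⟩ := hna.2 d hd (ne_of_mem_erase hd).symm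
      exact ⟨h₃.symm, h₂.symm⟩
  · rintro ⟨P, hP, j, hj, rfl⟩
    obtain ⟨hPB, rfl, hna⟩ := mem_Mk.mp hP
    obtain ⟨⟨hj, hj'⟩, hjP⟩ := mem_freeCols.mp hj
    have hrP : (r, j) ∉ P := fun h => by have := hB _ (hPB h); omega
    refine mem_Mk.mpr ⟨insert_subset (mem_union_left _ (mem_rowB.mpr ⟨rfl, hj, hj'⟩))
      (hPB.trans subset_union_right), card_insert_of_notMem hrP, nonatt_insert.mpr ⟨hna, ?_⟩⟩
    intro d hd _
    have := hB d (hPB hd)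
    exact ⟨by dsimp only; omega, (hjP d hd).2.symm, (hjP d hd).1.symm, by dsimp only; omega⟩

lemma uncancelled_rowB_union_insert (hB : ∀ c ∈ B, r < c.1 ∧ c.1 < c.2 ∧ c.2 ≤ r + α)
    (hPB : P ⊆ B) (j : ℕ) :
    uncancelled (rowB r α ∪ B) (insert (r, j) P) =
      ((freeCols r α P).filter (j < ·)).image (Prod.mk r) ∪ uncancelled B P := by
  have hP : ∀ d ∈ P, r < d.1 ∧ d.1 < d.2 := fun d hd => ⟨(hB d (hPB hd)).1, (hB d (hPB hd)).2.1⟩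
  rw [uncancelled, filter_union, rowB, filter_image]
  congr 1
  · congr 1
    ext x
    simp only [mem_filter]
    rw [cancelled_insert]
    simp only [mem_freeCols, mem_Icc, Nat.succ_le_iff, mem_insert, Prod.mk.injEq, true_and,
      lt_irrefl, false_and, or_false, not_or, cancelled]
    constructor
    · rintro ⟨hx, ⟨hxj, -⟩, hxj', hcanc⟩
      refine ⟨⟨hx, fun d hd => ⟨fun h => hcanc ⟨d, hd, .inr ⟨(hP d hd).1, .inr h.symm⟩⟩,
        fun h => hcanc ⟨d, hd, .inr ⟨(hP d hd).1, .inl h.symm⟩⟩⟩⟩, ?_⟩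
      omega
    · rintro ⟨⟨hx, hxP⟩, hjx⟩
      refine ⟨hx, ⟨by omega, fun h => (hP _ h).1.ne rfl⟩, by omega, ?_⟩
      rintro ⟨d, hd, ⟨h, -⟩ | ⟨-, h | h⟩⟩
      · exact (hP d hd).1.ne h.symm
      · exact (hxP d hd).2 h.symm
      · exact (hxP d hd).1 h.symm
  · refine filter_congr fun c hc => ?_
    have := hB c hc
    have hc_ne : c ≠ (r, j) := fun h => by rw [h] at this; exact this.1.false
    rw [mem_insert, cancelled_insert]
    simp only [hc_ne, false_or]
    constructor <;> rintro ⟨h₁, h₂⟩ <;> refine ⟨h₁, ?_⟩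
    · exact fun h => h₂ (.inr h)
    · rintro ((⟨h, -⟩ | ⟨h, -⟩) | h)
      · exact this.1.ne h
      · exact this.1.not_gt h
      · exact h₂ h

lemma card_uncancelled_rowB_union_insert (hB : ∀ c ∈ B, r < c.1 ∧ c.1 < c.2 ∧ c.2 ≤ r + α)
    (hPB : P ⊆ B) (j : ℕ) :
    #(uncancelled (rowB r α ∪ B) (insert (r, j) P)) =
      #((freeCols r α P).filter (j < ·)) + #(uncancelled B P) := by
  rw [uncancelled_rowB_union_insert hB hPB j, card_union_of_disjoint,
    card_image_of_injective _ (Prod.mk_right_injective r)]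
  simp only [disjoint_left, mem_image, uncancelled, mem_filter]
  rintro _ ⟨x, -, rfl⟩ ⟨hc, -⟩
  exact (hB _ hc).1.false

lemma mq_rowB_union {q : ℂ} (hq1 : q ≠ 1) (hB : ∀ c ∈ B, r < c.1 ∧ c.1 < c.2 ∧ c.2 ≤ r + α)
    (hrows : #(B.image Prod.fst) ≤ k) :
    mq q (rowB r α ∪ B) (k + 1) = qInt q ((α : ℤ) - 2 * k) * mq q B k := by
  have hPr : ∀ P ∈ Mk B k, ∀ c ∈ P, c.1 ≠ r := fun P hP c hc =>
    (hB c ((mem_Mk.mp hP).1 hc)).1.ne'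
  rw [mq, Mk_rowB_union hB hrows, sum_biUnion, mq, mul_sum]
  · refine sum_congr rfl fun P hP => ?_
    rw [sum_image fun j₁ _ j₂ _ h => (insert_rowCell_inj (hPr P hP) (hPr P hP) h).1]
    simp_rw [card_uncancelled_rowB_union_insert hB (mem_Mk.mp hP).1, pow_add, ← sum_mul,
      sum_pow_card_filter_lt, ← qInt_natCast hq1]
    have h_card := card_freeCols_add hB hP
    rw [show (α : ℤ) - 2 * k = #(freeCols r α P) by omega]
  · intro P₁ h₁ P₂ h₂ hne
    simp only [Function.onFun, disjoint_left, mem_image]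
    rintro _ ⟨j₁, -, rfl⟩ ⟨j₂, -, h⟩
    exact hne (insert_rowCell_inj (hPr P₂ h₂) (hPr P₁ h₁) h).2.symm

end TopRow

section RowStack

variable {σ b : ℕ → ℕ} {n : ℕ}

def rowStack (σ b : ℕ → ℕ) (n : ℕ) : Finset (ℕ × ℕ) := (Icc 1 n).biUnion fun i => rowB (σ i) (b i)

lemma rowStack_succ : rowStack σ b (n + 1) = rowB (σ (n + 1)) (b (n + 1)) ∪ rowStack σ b n := by
  rw [rowStack, ← insert_Icc_right_eq_Icc_add_one (by omega), biUnion_insert, rowStack]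

lemma image_fst_rowStack_subset :
    (rowStack σ b n).image Prod.fst ⊆ ((Icc 1 n).filter (0 < b ·)).image σ := by
  simp only [image_subset_iff, rowStack, mem_biUnion, mem_image, mem_filter]
  rintro c ⟨i, hi, hc⟩
  obtain ⟨h₁, h₂, h₃⟩ := mem_rowB.mp hc
  exact ⟨i, ⟨hi, by omega⟩, h₁.symm⟩

lemma card_image_fst_rowStack_le :
    #((rowStack σ b n).image Prod.fst) ≤ #((Icc 1 n).filter (0 < b ·)) :=
  (card_le_card image_fst_rowStack_subset).trans card_image_le

lemma mq_rowStack_eq_zero {q : ℂ} (hb : b 1 = 0) (hn : 1 ≤ n) : mq q (rowStack σ b n) n = 0 := by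
  refine mq_eq_zero_of_card_image_fst_lt q ?_
  have h_rows : (Icc 1 n).filter (0 < b ·) ⊆ Icc 2 n := fun i hi => by
    obtain ⟨hi, hbi⟩ := mem_filter.mp hi
    have : i ≠ 1 := by rintro rfl; omega
    simp only [mem_Icc] at hi ⊢
    omega
  calc _ ≤ #((Icc 1 n).filter (0 < b ·)) := card_image_fst_rowStack_le
    _ ≤ #(Icc 2 n) := card_le_card h_rows
    _ < n := by simp; omega

theorem mq_rowStack {q : ℂ} (hq1 : q ≠ 1) (hσ : StrictAntiOn σ (Set.Icc 1 n))
    (hnest : MonotoneOn (fun i => σ i + b i) (Set.Icc 1 n)) :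
    mq q (rowStack σ b n) n = ∏ i ∈ Icc 1 n, qInt q ((b i : ℤ) - 2 * i + 2) := by
  induction n with
  | zero => simp [rowStack, mq, Mk, uncancelled, nonatt, filter_singleton]
  | succ n ih =>
    have h_sub : Set.Icc 1 n ⊆ Set.Icc 1 (n + 1) := Set.Icc_subset_Icc_right n.le_succ
    have h_top : n + 1 ∈ Set.Icc 1 (n + 1) := ⟨n.succ_pos, le_rfl⟩
    have h_below : ∀ c ∈ rowStack σ b n,
        σ (n + 1) < c.1 ∧ c.1 < c.2 ∧ c.2 ≤ σ (n + 1) + b (n + 1) := by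
      intro c hc
      obtain ⟨i, hi, hc⟩ := mem_biUnion.mp hc
      obtain ⟨h₁, h₂, h₃⟩ := mem_rowB.mp hc
      have hi' : i ∈ Set.Icc 1 (n + 1) := h_sub (by simpa using hi)
      have hi_lt : i < n + 1 := Nat.lt_succ_of_le (mem_Icc.mp hi).2
      have := hσ hi' h_top hi_lt
      have := hnest hi' h_top hi_lt.le
      dsimp only at this
      omega
    have h_rows : #((rowStack σ b n).image Prod.fst) ≤ n :=
      card_image_fst_rowStack_le.trans ((card_filter_le _ _).trans (by simp))
    rw [rowStack_succ, mq_rowB_union hq1 h_below h_rows,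
      ih (hσ.mono h_sub) (hnest.mono h_sub), prod_Icc_succ_top (by omega), mul_comm]
    push_cast
    ring_nf

end RowStack

section ShiftedBoard

variable {l A : ℕ → ℕ} {N : ℕ}

lemma Lsum_succ (l : ℕ → ℕ) (t : ℕ) : Lsum l (t + 1) = Lsum l t + l (t + 1) :=
  sum_Icc_succ_top (by omega) l

lemma Lsum_mono (l : ℕ → ℕ) : Monotone (Lsum l) := fun _ _ h =>
  sum_le_sum_of_subset (Icc_subset_Icc_right h)

lemma Lsum_strictMonoOn (hl : ∀ i, 1 ≤ i → i ≤ N → 1 ≤ l i) :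
    StrictMonoOn (Lsum l) (Set.Icc 0 N) :=
  strictMonoOn_of_lt_succ Set.ordConnected_Icc fun m _ _ hm => by
    rw [Order.succ_eq_add_one, Lsum_succ]
    have := hl (m + 1) (by omega) (by simpa [Order.succ_eq_add_one] using hm.2)
    omega

/-- Row `i` of `B_N^l` counted from the bottom, i.e. the paper's row `N - i + 1`, has label
`L_N - L_i + 1`. -/
def rowLabel (l : ℕ → ℕ) (N i : ℕ) : ℕ := Lsum l N - Lsum l i + 1

lemma lFerrers_eq_rowStack :
    lFerrers N l A = rowStack (rowLabel l N) (fun i => A (N - i + 1)) N := by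
  ext c
  simp only [lFerrers, rowStack, rowLabel, mem_biUnion, mem_image, mem_rowB, mem_Icc]
  constructor
  · rintro ⟨i, hi, j, hj, rfl⟩
    refine ⟨N - i + 1, by omega, rfl, ?_⟩
    rw [show N - (N - i + 1) + 1 = i by omega]
    omega
  · rintro ⟨i, hi, h₁, h₂, h₃⟩
    refine ⟨N - i + 1, by omega, c.2 - c.1, by omega, ?_⟩
    rw [show N - (N - i + 1) + 1 = i by omega, ← h₁]
    exact Prod.ext rfl (by dsimp only; omega)

lemma rowLabel_strictAntiOn (hl : ∀ i, 1 ≤ i → i ≤ N → 1 ≤ l i) :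
    StrictAntiOn (rowLabel l N) (Set.Icc 1 N) := fun i hi j hj hij => by
  have := Lsum_strictMonoOn hl ⟨Nat.zero_le i, hi.2⟩ ⟨Nat.zero_le j, hj.2⟩ hij
  have := Lsum_mono l hj.2
  simp only [rowLabel]
  omega

lemma rowLabel_add_monotoneOn
    (hgap : ∀ i, 1 ≤ i → i + 1 ≤ N → A (i + 1) ≠ 0 → l (N + 1 - i) + A (i + 1) ≤ A i)
    (hA : ∀ i, 1 ≤ i → i ≤ N → A i ≠ 0) :
    MonotoneOn (fun i => rowLabel l N i + A (N - i + 1)) (Set.Icc 1 N) :=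
  monotoneOn_of_le_succ Set.ordConnected_Icc fun m _ hm hm' => by
    simp only [Order.succ_eq_add_one, Set.mem_Icc] at hm hm' ⊢
    have := hgap (N - m) (by omega) (by omega) (hA _ (by omega) (by omega))
    rw [show N + 1 - (N - m) = m + 1 by omega] at this
    have := Lsum_succ l m
    have := Lsum_mono l hm'.2
    simp only [rowLabel, show N - (m + 1) + 1 = N - m by omega]
    omega

theorem mq_lFerrers {q : ℂ} (hq1 : q ≠ 1) (hl : ∀ i, 1 ≤ i → i ≤ N → 1 ≤ l i)
    (hanti : ∀ i, 1 ≤ i → i + 1 ≤ N → A (i + 1) ≤ A i)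
    (hgap : ∀ i, 1 ≤ i → i + 1 ≤ N → A (i + 1) ≠ 0 → l (N + 1 - i) + A (i + 1) ≤ A i) :
    mq q (lFerrers N l A) N = ∏ i ∈ Icc 1 N, qInt q ((A (N - i + 1) : ℤ) - 2 * i + 2) := by
  rw [lFerrers_eq_rowStack]
  by_cases hAN : 1 ≤ N ∧ A N = 0
  · obtain ⟨hN, hAN⟩ := hAN
    rw [mq_rowStack_eq_zero (by simpa [Nat.sub_add_cancel hN]) hN, eq_comm]
    refine prod_eq_zero (mem_Icc.mpr ⟨le_rfl, hN⟩) ?_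
    simp [Nat.sub_add_cancel hN, hAN, qInt_zero]
  · have h_anti : AntitoneOn A (Set.Icc 1 N) :=
      antitoneOn_of_succ_le Set.ordConnected_Icc fun i _ hi hi' => by
        simp only [Order.succ_eq_add_one, Set.mem_Icc] at hi hi' ⊢
        exact hanti i hi.1 hi'.2
    have hA : ∀ i, 1 ≤ i → i ≤ N → A i ≠ 0 := fun i hi hiN => by
      have := h_anti ⟨hi, hiN⟩ ⟨hi.trans hiN, le_rfl⟩ hiN
      omega
    exact mq_rowStack hq1 (rowLabel_strictAntiOn hl) (rowLabel_add_monotoneOn hgap hA)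

end ShiftedBoard

theorem lazy_matching_top_general (q : ℂ) (hq1 : q ≠ 1)
    (N : ℕ) (l A : ℕ → ℕ)
    (hl : ∀ i, 1 ≤ i → i ≤ N → 1 ≤ l i)
    (hanti : ∀ i, 1 ≤ i → i + 1 ≤ N → A (i + 1) ≤ A i)
    (hgap : ∀ i, 1 ≤ i → i + 1 ≤ N → A (i + 1) ≠ 0 → l (N + 1 - i) + A (i + 1) ≤ A i) :
    mq q (lFerrers N l A) N
        = ∏ i ∈ Finset.Icc 1 N, qInt q ((A (N - i + 1) : ℤ) - 2 * (i : ℤ) + 2)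
      ∧ mq q (lFerrers N l (fun i => Lsum l (N - i + 1))) N
        = ∏ i ∈ Finset.Icc 1 N, qInt q ((Lsum l i : ℤ) - 2 * (i : ℤ) + 2) := by
  refine ⟨mq_lFerrers hq1 hl hanti hgap, ?_⟩
  have h_full_gap : ∀ i, 1 ≤ i → i + 1 ≤ N →
      l (N + 1 - i) + Lsum l (N - (i + 1) + 1) ≤ Lsum l (N - i + 1) := fun i _ _ => by
    rw [show N + 1 - i = N - i + 1 by omega, show N - (i + 1) + 1 = N - i by omega, Lsum_succ]
    omega
  rw [mq_lFerrers (A := fun i => Lsum l (N - i + 1)) hq1 hl (fun i _ _ => Lsum_mono l (by omega))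
    fun i h₁ h₂ _ => h_full_gap i h₁ h₂]
  refine prod_congr rfl fun i hi => ?_
  rw [show N - (N - i + 1) + 1 = i by have := mem_Icc.mp hi; omega]

/-- Product formula for `m_N^{(l)}(q;B)`, and its specialization to the full board. -/
theorem lazy_matching_top (q : ℂ) (hq : q ≠ 0) (hq1 : q ≠ 1)
    (N : ℕ) (l A : ℕ → ℕ)
    (hl : ∀ i, 1 ≤ i → i ≤ N → 1 ≤ l i)
    (hanti : ∀ i, 1 ≤ i → i + 1 ≤ N → A (i + 1) ≤ A i)
    (hle : ∀ i, 1 ≤ i → i ≤ N → A i ≤ Lsum l (N - i + 1))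
    (hgap : ∀ i, 1 ≤ i → i + 1 ≤ N → A (i + 1) ≠ 0 → l (N + 1 - i) + A (i + 1) ≤ A i) :
    mq q (lFerrers N l A) N
        = ∏ i ∈ Finset.Icc 1 N, qInt q ((A (N - i + 1) : ℤ) - 2 * (i : ℤ) + 2)
      ∧ mq q (lFerrers N l (fun i => Lsum l (N - i + 1))) N
        = ∏ i ∈ Finset.Icc 1 N, qInt q ((Lsum l i : ℤ) - 2 * (i : ℤ) + 2) :=
  lazy_matching_top_general q hq1 N l A hl hanti hgap

end EllRook
end
end
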